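/- Consider the discrete-time stochastic system x_{k+1} = f(x_k, d_k) with disturbances d_k drawn i.i.d. from a distribution D on ℝ^m with ‖D‖_{L^p} < ∞. Suppose V : ℝⁿ → ℝ_{≥0} is continuous and there exist a, b, c > 0, α ∈ (0,1), and a class-K function κ₄ such that a‖x‖^c ≤ V(x) ≤ b‖x‖^c for all x and E_{d∼D}[V(f(x,d))] − V(x) ≤ −α V(x) + κ₄(‖D‖_{L^p}) for all x. Then the system is recurrent: there exists a bounded set A ⊂ ℝⁿ (namely any sublevel set V_γ = {x : V(x) ≤ γ} with γ > κ₄(‖D‖_{L^p})/α) such that for every initial state x₀, the hitting time τ_A(x₀) = inf{k ∈ ℕ : x_k ∈ A} satisfies P{τ_A(x₀) < ∞} = 1. -/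

import Mathlib

open MeasureTheory ProbabilityTheory Filter Set

def ClassK (γ : ℝ → ℝ) : Prop :=
  ContinuousOn γ (Set.Ici 0) ∧ StrictMonoOn γ (Set.Ici 0) ∧ γ 0 = 0

open scoped ENNReal

/-! Outside the sublevel set `A = {V ≤ γ}` the drift bound gives
`E[V(x_{k+1}) | d₀, …, d_{k-1}] + ε ≤ V(x_k)` with `ε = αγ - κ₄(Dlp) > 0`, because `d_k` is
independent of the past that determines `x_k`. Hence `L_k = E[V(x_k); x₀, …, x_k ∉ A]` drops by at
least `ε · P(x₀, …, x_k ∉ A)` at every step, so `k ε P(x_j ∉ A for all j) ≤ V(x₀)` for all `k`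
and the trajectory hits `A` almost surely. The sublevel set is bounded because `a‖x‖^c ≤ V x`. -/

section Independence

variable {Ω α β : Type*} {m₁ mΩ : MeasurableSpace Ω} [MeasurableSpace α] [MeasurableSpace β]
  {P : Measure Ω} [IsFiniteMeasure P] {X : Ω → α} {Y : Ω → β} {s : Set Ω}

theorem map_restrict_prodMk_eq_prod_of_indep (hm₁ : m₁ ≤ mΩ)
    (hind : Indep m₁ (MeasurableSpace.comap Y ‹_›) P) (hs : MeasurableSet[m₁] s)
    (hX : Measurable[m₁] X) (hY : Measurable Y) :
    (P.restrict s).map (fun ω => (X ω, Y ω)) = ((P.restrict s).map X).prod (P.map Y) := by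
  have hX' : Measurable X := hX.mono hm₁ le_rfl
  refine (Measure.prod_eq fun A B hA hB => ?_).symm
  rw [Measure.map_apply (hX'.prodMk hY) (hA.prod hB), Measure.map_apply hX' hA,
    Measure.map_apply hY hB, Measure.restrict_apply (hX'.prodMk hY (hA.prod hB)),
    Measure.restrict_apply (hX' hA), mk_preimage_prod, inter_right_comm]
  exact (Indep_iff _ _ _).1 hind _ _ ((hX hA).inter hs) ⟨B, hB, rfl⟩

theorem setLIntegral_comp_prodMk_of_indep (hm₁ : m₁ ≤ mΩ)
    (hind : Indep m₁ (MeasurableSpace.comap Y ‹_›) P) (hs : MeasurableSet[m₁] s)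
    (hX : Measurable[m₁] X) (hY : Measurable Y) {Φ : α × β → ℝ≥0∞} (hΦ : Measurable Φ) :
    ∫⁻ ω in s, Φ (X ω, Y ω) ∂P = ∫⁻ ω in s, ∫⁻ v, Φ (X ω, v) ∂(P.map Y) ∂P := by
  have hX' : Measurable X := hX.mono hm₁ le_rfl
  rw [← lintegral_map hΦ (hX'.prodMk hY), map_restrict_prodMk_eq_prod_of_indep hm₁ hind hs hX hY,
    lintegral_prod _ hΦ.aemeasurable, lintegral_map hΦ.lintegral_prod_right' hX']

end Independence

section NoisePast

variable {Ω F : Type*} {mΩ : MeasurableSpace Ω} [mF : MeasurableSpace F]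

abbrev noisePast (d : ℕ → Ω → F) (k : ℕ) : MeasurableSpace Ω :=
  ⨆ j ∈ Iio k, mF.comap (d j)

theorem noisePast_mono (d : ℕ → Ω → F) : Monotone (noisePast d) :=
  fun _ _ hkl => biSup_mono fun _ hj => lt_of_lt_of_le hj hkl

variable {d : ℕ → Ω → F}

theorem noisePast_le (hd : ∀ k, Measurable (d k)) (k : ℕ) : noisePast d k ≤ mΩ :=
  iSup₂_le fun j _ => (hd j).comap_le

theorem measurable_noisePast_succ (k : ℕ) : Measurable[noisePast d (k + 1)] (d k) :=
  Measurable.of_comap_le (le_biSup (fun j => mF.comap (d j)) (mem_Iio.2 k.lt_succ_self))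

theorem indep_noisePast {P : Measure Ω} (hd : ∀ k, Measurable (d k)) (hindep : iIndepFun d P)
    (k : ℕ) : Indep (noisePast d k) (mF.comap (d k)) P := by
  simpa only [iSup_singleton] using indep_iSup_of_disjoint (fun j => (hd j).comap_le)
    hindep.iIndep (S := Iio k) (T := {k}) (by simp)

theorem measurable_noisePast_trajectory {E : Type*} [MeasurableSpace E] {f : E → F → E}
    (hf : Measurable (Function.uncurry f)) {x : ℕ → Ω → E} {x₀ : E} (hx0 : ∀ ω, x 0 ω = x₀)
    (hstep : ∀ k ω, x (k + 1) ω = f (x k ω) (d k ω)) (k : ℕ) :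
    Measurable[noisePast d k] (x k) := by
  induction k with
  | zero => simpa only [show x 0 = fun _ => x₀ from funext hx0] using measurable_const
  | succ k ih =>
    rw [show x (k + 1) = fun ω => Function.uncurry f (x k ω, d k ω) from funext (hstep k)]
    exact hf.comp ((ih.mono (noisePast_mono d k.le_succ) le_rfl).prodMk
      (measurable_noisePast_succ k))

end NoisePast

theorem ENNReal.nat_mul_le_of_add_le {L s : ℕ → ℝ≥0∞} (hs : Antitone s)
    (h : ∀ k, L (k + 1) + s k ≤ L k) (k : ℕ) : k * s k ≤ L 0 := by
  suffices ∀ k : ℕ, L k + k * s k ≤ L 0 from le_add_self.trans (this k)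
  intro k
  induction k with
  | zero => simp
  | succ k ih =>
    calc L (k + 1) + (k + 1 : ℕ) * s (k + 1) ≤ L (k + 1) + s k + k * s k := by
          push_cast
          rw [add_mul, one_mul, add_comm (k * s (k + 1)), ← add_assoc]
          gcongr <;> exact hs k.le_succ
      _ ≤ L k + k * s k := by gcongr; exact h k
      _ ≤ L 0 := ih

theorem ENNReal.eq_zero_of_forall_nat_mul_le {q C : ℝ≥0∞} (hC : C ≠ ∞)
    (h : ∀ k : ℕ, k * q ≤ C) : q = 0 := by
  by_contra hq
  obtain ⟨k, hk⟩ := ENNReal.exists_nat_mul_gt hq hC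
  exact (h k).not_gt hk

section FosterLyapunov

variable {Ω E F : Type*} {mΩ : MeasurableSpace Ω} [MeasurableSpace E] [MeasurableSpace F]
  {P : Measure Ω} [IsProbabilityMeasure P] {μ : Measure F} {f : E → F → E} {d : ℕ → Ω → F}
  {x : ℕ → Ω → E} {x₀ : E} {A : Set E} {V : E → ℝ≥0∞} {ε : ℝ≥0∞}

theorem measurableSet_noisePast_avoid (hf : Measurable (Function.uncurry f))
    (hx0 : ∀ ω, x 0 ω = x₀) (hstep : ∀ k ω, x (k + 1) ω = f (x k ω) (d k ω))
    (hA : MeasurableSet A) (k : ℕ) :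
    MeasurableSet[noisePast d k] {ω | ∀ j ≤ k, x j ω ∉ A} := by
  simp only [ofPred_forall]
  exact .iInter fun j => .iInter fun hj =>
    ((measurable_noisePast_trajectory hf hx0 hstep j).mono (noisePast_mono d hj) le_rfl) hA.compl

theorem setLIntegral_avoid_succ_add_le (hf : Measurable (Function.uncurry f))
    (hd : ∀ k, Measurable (d k)) (hindep : iIndepFun d P) (hdist : ∀ k, P.map (d k) = μ)
    (hx0 : ∀ ω, x 0 ω = x₀) (hstep : ∀ k ω, x (k + 1) ω = f (x k ω) (d k ω))
    (hA : MeasurableSet A) (hV : Measurable V)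
    (hdrift : ∀ y ∉ A, ∫⁻ v, V (f y v) ∂μ + ε ≤ V y) (k : ℕ) :
    ∫⁻ ω in {ω | ∀ j ≤ k + 1, x j ω ∉ A}, V (x (k + 1) ω) ∂P
        + ε * P {ω | ∀ j ≤ k, x j ω ∉ A}
      ≤ ∫⁻ ω in {ω | ∀ j ≤ k, x j ω ∉ A}, V (x k ω) ∂P := by
  set G := {ω | ∀ j ≤ k, x j ω ∉ A}
  have hG := measurableSet_noisePast_avoid hf hx0 hstep hA k
  have hxk := measurable_noisePast_trajectory hf hx0 hstep k
  have hG' : MeasurableSet G := noisePast_le hd k _ hG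
  have hΦ : Measurable fun z : E × F => V (f z.1 z.2) := hV.comp hf
  calc ∫⁻ ω in {ω | ∀ j ≤ k + 1, x j ω ∉ A}, V (x (k + 1) ω) ∂P + ε * P G
      ≤ ∫⁻ ω in G, V (f (x k ω) (d k ω)) ∂P + ∫⁻ _ in G, ε ∂P := by
        simp only [hstep, setLIntegral_const]
        gcongr ?_ + _
        exact lintegral_mono_set fun ω hω j hj => hω j (hj.trans k.le_succ)
    _ = ∫⁻ ω in G, (∫⁻ v, V (f (x k ω) v) ∂μ + ε) ∂P := by
        rw [lintegral_add_right _ measurable_const, ← hdist k,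
          setLIntegral_comp_prodMk_of_indep (noisePast_le hd k) (indep_noisePast hd hindep k)
            hG hxk (hd k) hΦ]
    _ ≤ ∫⁻ ω in G, V (x k ω) ∂P :=
        setLIntegral_mono' hG' fun ω hω => hdrift _ (hω k le_rfl)

theorem measure_exists_mem_eq_one_of_drift (hf : Measurable (Function.uncurry f))
    (hd : ∀ k, Measurable (d k)) (hindep : iIndepFun d P) (hdist : ∀ k, P.map (d k) = μ)
    (hx0 : ∀ ω, x 0 ω = x₀) (hstep : ∀ k ω, x (k + 1) ω = f (x k ω) (d k ω))
    (hA : MeasurableSet A) (hV : Measurable V) (hVx₀ : V x₀ ≠ ∞) (hε : ε ≠ 0)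
    (hdrift : ∀ y ∉ A, ∫⁻ v, V (f y v) ∂μ + ε ≤ V y) :
    P {ω | ∃ k, x k ω ∈ A} = 1 := by
  set G : ℕ → Set Ω := fun k => {ω | ∀ j ≤ k, x j ω ∉ A}
  have hL₀ : ∫⁻ ω in G 0, V (x 0 ω) ∂P ≤ V x₀ := by
    simpa [hx0] using setLIntegral_le_lintegral (μ := P) (G 0) fun ω => V (x 0 ω)
  have hbound (k : ℕ) : k * (ε * P (⋂ j, G j)) ≤ V x₀ := by
    refine le_trans ?_ ((ENNReal.nat_mul_le_of_add_le (s := fun k => ε * P (G k))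
      (fun k l hkl => by dsimp only; gcongr; exact fun ω hω j hj => hω j (hj.trans hkl))
      (setLIntegral_avoid_succ_add_le hf hd hindep hdist hx0 hstep hA hV hdrift) k).trans hL₀)
    gcongr
    exact iInter_subset G k
  have hhit : MeasurableSet {ω | ∃ k, x k ω ∈ A} := by
    simp only [ofPred_exists]
    exact .iUnion fun k => (measurable_noisePast_trajectory hf hx0 hstep k).mono
      (noisePast_le hd k) le_rfl hA
  rw [← prob_compl_eq_zero_iff hhit]
  have hcompl : {ω | ∃ k, x k ω ∈ A}ᶜ = ⋂ k, G k := by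
    ext ω
    simp only [mem_compl_iff, mem_ofPred_eq, not_exists, mem_iInter, G]
    exact ⟨fun h k j _ => h j, fun h j => h j j le_rfl⟩
  rw [hcompl]
  exact (mul_eq_zero.1 (ENNReal.eq_zero_of_forall_nat_mul_le hVx₀ hbound)).resolve_left hε

end FosterLyapunov

theorem isBounded_setOf_le_of_mul_rpow_le {E : Type*} [SeminormedAddCommGroup E] {V : E → ℝ}
    {a c : ℝ} (ha : 0 < a) (hc : 0 < c) (hV : ∀ x, a * ‖x‖ ^ c ≤ V x) (γ : ℝ) :
    Bornology.IsBounded {x | V x ≤ γ} := by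
  refine (Metric.isBounded_closedBall (x := 0) (r := (γ / a) ^ c⁻¹)).subset fun x hx => ?_
  have hxγ : ‖x‖ ^ c ≤ γ / a := by
    rw [le_div_iff₀' ha]
    exact (hV x).trans hx
  have hγa : 0 ≤ γ / a := (by positivity : (0 : ℝ) ≤ ‖x‖ ^ c).trans hxγ
  rw [Metric.mem_closedBall, dist_zero_right,
    ← Real.rpow_le_rpow_iff (norm_nonneg x) (by positivity) hc, ← Real.rpow_mul hγa,
    inv_mul_cancel₀ hc.ne', Real.rpow_one]
  exact hxγ

theorem eissp_lyapunov_implies_recurrence_general {n m : ℕ}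
    (f : EuclideanSpace ℝ (Fin n) → EuclideanSpace ℝ (Fin m) → EuclideanSpace ℝ (Fin n))
    (hf : Continuous (Function.uncurry f))
    (μ : Measure (EuclideanSpace ℝ (Fin m)))
    (Dlp : ℝ)
    (V : EuclideanSpace ℝ (Fin n) → ℝ) (hVcont : Continuous V) (hVnonneg : ∀ x, 0 ≤ V x)
    (a b c α : ℝ) (ha : 0 < a) (hc : 0 < c) (hα : α ∈ Set.Ioo (0 : ℝ) 1)
    (κ₄ : ℝ → ℝ)
    (hsandwich : ∀ x, a * ‖x‖ ^ c ≤ V x ∧ V x ≤ b * ‖x‖ ^ c)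
    (hVint : ∀ x, Integrable (fun v => V (f x v)) μ)
    (hdrift : ∀ x, (∫ v, V (f x v) ∂μ) - V x ≤ -(α * V x) + κ₄ Dlp)
    {Ω : Type*} {mΩ : MeasurableSpace Ω} (P : Measure Ω) [IsProbabilityMeasure P]
    (d : ℕ → Ω → EuclideanSpace ℝ (Fin m)) (hdmeas : ∀ k, Measurable (d k))
    (hindep : iIndepFun d P)
    (hdist : ∀ k, Measure.map (d k) P = μ) :
    ∀ γ : ℝ, κ₄ Dlp / α < γ →
      Bornology.IsBounded {x' : EuclideanSpace ℝ (Fin n) | V x' ≤ γ} ∧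
      ∀ (x₀ : EuclideanSpace ℝ (Fin n)) (x : ℕ → Ω → EuclideanSpace ℝ (Fin n)),
        (∀ ω, x 0 ω = x₀) → (∀ k ω, x (k + 1) ω = f (x k ω) (d k ω)) →
        P {ω | ∃ k : ℕ, x k ω ∈ {x' : EuclideanSpace ℝ (Fin n) | V x' ≤ γ}} = 1 := by
  intro γ hγ
  refine ⟨isBounded_setOf_le_of_mul_rpow_le ha hc (fun x => (hsandwich x).1) γ,
    fun x₀ x hx0 hstep => ?_⟩
  have hmargin : 0 < α * γ - κ₄ Dlp := by
    rw [div_lt_iff₀ hα.1] at hγ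
    linarith
  refine measure_exists_mem_eq_one_of_drift (V := fun y => ENNReal.ofReal (V y))
    hf.measurable hdmeas hindep hdist hx0 hstep (measurableSet_le hVcont.measurable
    measurable_const) hVcont.measurable.ennreal_ofReal ENNReal.ofReal_ne_top
    (ENNReal.ofReal_pos.2 hmargin).ne' fun y hy => ?_
  have hVy : γ < V y := not_le.1 hy
  rw [← ofReal_integral_eq_lintegral_ofReal (hVint y) (.of_forall fun _ => hVnonneg _),
    ← ENNReal.ofReal_add (integral_nonneg fun _ => hVnonneg _) hmargin.le]
  refine ENNReal.ofReal_le_ofReal ?_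
  nlinarith [hdrift y, hα.1]

/-- **E-ISSp Lyapunov function implies recurrence (Theorem 4).** For `x_{k+1} = f(x_k,d_k)`
with `d_k` i.i.d. from `μ` with finite `L^p`-norm `Dlp`, suppose the continuous
`V : ℝⁿ → ℝ_{≥0}` satisfies `a‖x‖^c ≤ V(x) ≤ b‖x‖^c` and the drift
`E_d[V(f(x,d))] - V(x) ≤ -α V(x) + κ₄(Dlp)`.  Then the system is recurrent: every sublevel
set `V_γ = {x : V(x) ≤ γ}` with `γ > κ₄(Dlp)/α` is a bounded set that every trajectory,
from every initial state, hits in finite time with probability one. -/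
theorem eissp_lyapunov_implies_recurrence {n m : ℕ}
    (f : EuclideanSpace ℝ (Fin n) → EuclideanSpace ℝ (Fin m) → EuclideanSpace ℝ (Fin n))
    (hf : Continuous (Function.uncurry f))
    (μ : Measure (EuclideanSpace ℝ (Fin m))) [IsProbabilityMeasure μ]
    (p : ℝ) (hp : 0 < p)
    (hmom : Integrable (fun v => ‖v‖ ^ p) μ)
    (Dlp : ℝ) (hDlp : Dlp = (∫ v, ‖v‖ ^ p ∂μ) ^ (1 / p))
    (V : EuclideanSpace ℝ (Fin n) → ℝ) (hVcont : Continuous V) (hVnonneg : ∀ x, 0 ≤ V x)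
    (a b c α : ℝ) (ha : 0 < a) (hb : 0 < b) (hc : 0 < c) (hα : α ∈ Set.Ioo (0 : ℝ) 1)
    (κ₄ : ℝ → ℝ) (hκ₄ : ClassK κ₄)
    (hsandwich : ∀ x, a * ‖x‖ ^ c ≤ V x ∧ V x ≤ b * ‖x‖ ^ c)
    (hVint : ∀ x, Integrable (fun v => V (f x v)) μ)
    (hdrift : ∀ x, (∫ v, V (f x v) ∂μ) - V x ≤ -(α * V x) + κ₄ Dlp)
    {Ω : Type*} {mΩ : MeasurableSpace Ω} (P : Measure Ω) [IsProbabilityMeasure P]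
    (d : ℕ → Ω → EuclideanSpace ℝ (Fin m)) (hdmeas : ∀ k, Measurable (d k))
    (hindep : iIndepFun d P)
    (hdist : ∀ k, Measure.map (d k) P = μ) :
    ∀ γ : ℝ, κ₄ Dlp / α < γ →
      Bornology.IsBounded {x' : EuclideanSpace ℝ (Fin n) | V x' ≤ γ} ∧
      ∀ (x₀ : EuclideanSpace ℝ (Fin n)) (x : ℕ → Ω → EuclideanSpace ℝ (Fin n)),
        (∀ ω, x 0 ω = x₀) → (∀ k ω, x (k + 1) ω = f (x k ω) (d k ω)) →
        P {ω | ∃ k : ℕ, x k ω ∈ {x' : EuclideanSpace ℝ (Fin n) | V x' ≤ γ}} = 1 :=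
  eissp_lyapunov_implies_recurrence_general f hf μ Dlp V hVcont hVnonneg a b c α ha hc hα κ₄
    hsandwich hVint hdrift (mΩ := mΩ) P d hdmeas hindep hdist
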